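/- Let 1 < α < 2 and ε > 0, and set R(p) = ∑_{n=1}^∞ (1 − cos(n·p))·n^{−α}. Then lim_{γ → ∞} ∫_0^π dp / (γ·(1 − cos p) + ε·R(p)) = 0 (limit as γ → +∞ along the reals). -/

import Mathlib

open Filter MeasureTheory Set Real Topology

/-!
By dominated convergence it suffices to bound the integrand, uniformly in `γ ≥ 0`, by
`(ε R(p))⁻¹` and to show that this is integrable on `(0, π]`; pointwise the integrand tends to
`0` because `1 - cos p > 0` there. Integrability comes from `R(p) ≥ c p^(α-1)`: with
`N = ⌊π/p⌋` every `n ≤ N` has `np ≤ π`, so `1 - cos(np) ≥ 2(np)²/π²`, and summing these terms gives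
`R(p) ≳ p² N^(3-α) ≳ p^(α-1)`. Since `α < 2`, `p^(1-α)` is integrable at `0`.
-/

theorem tendsto_integral_inv_mul_add_atTop_zero {X : Type*} [MeasurableSpace X] {μ : Measure X}
    {a b : X → ℝ} (ha : AEMeasurable a μ) (hb : AEMeasurable b μ)
    (ha_pos : ∀ᵐ x ∂μ, 0 < a x) (hb_pos : ∀ᵐ x ∂μ, 0 < b x)
    (hb_int : Integrable (fun x => (b x)⁻¹) μ) :
    Tendsto (fun γ : ℝ => ∫ x, (γ * a x + b x)⁻¹ ∂μ) atTop (𝓝 0) := by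
  have hmeas (γ : ℝ) : AEStronglyMeasurable (fun x => (γ * a x + b x)⁻¹) μ :=
    ((ha.const_mul γ).add hb).inv.aestronglyMeasurable
  have hbound : ∀ᶠ γ in atTop, ∀ᵐ x ∂μ, ‖(γ * a x + b x)⁻¹‖ ≤ (b x)⁻¹ := by
    filter_upwards [eventually_ge_atTop 0] with γ hγ
    filter_upwards [ha_pos, hb_pos] with x hax hbx
    have hle : b x ≤ γ * a x + b x := le_add_of_nonneg_left (by positivity)
    rw [norm_inv, Real.norm_of_nonneg (hbx.trans_le hle).le]
    exact inv_anti₀ hbx hle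
  have hlim : ∀ᵐ x ∂μ, Tendsto (fun γ : ℝ => (γ * a x + b x)⁻¹) atTop (𝓝 0) := by
    filter_upwards [ha_pos] with x hax
    exact tendsto_inv_atTop_zero.comp
      (tendsto_atTop_add_const_right _ _ (tendsto_id.atTop_mul_const hax))
  simpa using tendsto_integral_filter_of_dominated_convergence _
    (Eventually.of_forall hmeas) hbound hb_int hlim

theorem one_sub_cos_pos_of_mem_Ioo {x : ℝ} (hx : x ∈ Ioo 0 (2 * π)) : 0 < 1 - cos x :=
  sub_pos.2 <| (cos_le_one x).lt_of_ne fun h =>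
    hx.1.ne' ((cos_eq_one_iff_of_lt_of_lt (by linarith [hx.1, pi_pos]) hx.2).1 h)

theorem cube_le_six_mul_sum_sq (N : ℕ) : (N : ℝ) ^ 3 ≤ 6 * ∑ n ∈ Finset.Icc 1 N, (n : ℝ) ^ 2 := by
  induction N with
  | zero => simp
  | succ N ih =>
    rw [Finset.sum_Icc_succ_top (by omega)]
    push_cast
    nlinarith [N.cast_nonneg (α := ℝ)]

/-- The paper's `R(p)`; the `n = 0` term vanishes. -/
noncomputable def longRangeSymbol (α p : ℝ) : ℝ :=
  ∑' n : ℕ, (1 - cos (n * p)) * (n : ℝ) ^ (-α)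

section longRangeSymbol

variable {α : ℝ}

theorem longRangeSymbol_term_nonneg (p : ℝ) (n : ℕ) :
    0 ≤ (1 - cos (n * p)) * (n : ℝ) ^ (-α) :=
  mul_nonneg (sub_nonneg.2 (cos_le_one _)) (by positivity)

theorem longRangeSymbol_term_le (x : ℝ) (n : ℕ) :
    ‖(1 - cos (n * x)) * (n : ℝ) ^ (-α)‖ ≤ 2 * (n : ℝ) ^ (-α) := by
  rw [norm_mul, Real.norm_of_nonneg (sub_nonneg.2 (cos_le_one _)),
    Real.norm_of_nonneg (by positivity)]
  gcongr
  linarith [neg_one_le_cos (n * x)]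

theorem summable_two_mul_rpow_neg (hα : 1 < α) : Summable fun n : ℕ => 2 * (n : ℝ) ^ (-α) :=
  (summable_nat_rpow.2 (by linarith)).mul_left 2

theorem summable_longRangeSymbol (hα : 1 < α) (p : ℝ) :
    Summable fun n : ℕ => (1 - cos (n * p)) * (n : ℝ) ^ (-α) :=
  (summable_two_mul_rpow_neg hα).of_norm_bounded (longRangeSymbol_term_le p)

theorem continuous_longRangeSymbol (hα : 1 < α) : Continuous (longRangeSymbol α) :=
  continuous_tsum (fun n => by fun_prop) (summable_two_mul_rpow_neg hα)
    fun n x => longRangeSymbol_term_le x n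

theorem longRangeSymbol_pos (hα : 1 < α) {p : ℝ} (hp : p ∈ Ioo 0 (2 * π)) :
    0 < longRangeSymbol α p := by
  have hfirst : 0 < (1 - cos ((1 : ℕ) * p)) * ((1 : ℕ) : ℝ) ^ (-α) := by
    simpa using one_sub_cos_pos_of_mem_Ioo hp
  exact hfirst.trans_le <|
    (summable_longRangeSymbol hα p).le_tsum 1 fun n _ => longRangeSymbol_term_nonneg p n

theorem longRangeSymbol_ge_of_mul_le_pi (hα : 1 < α) {p : ℝ} (hp : 0 ≤ p) {N : ℕ} (hN0 : 0 < N)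
    (hN : N * p ≤ π) : p ^ 2 * (N : ℝ) ^ (3 - α) / (3 * π ^ 2) ≤ longRangeSymbol α p := by
  have hN0' : (0 : ℝ) < N := by exact_mod_cast hN0
  have hterm : ∀ n ∈ Finset.Icc 1 N,
      2 / π ^ 2 * p ^ 2 * (N : ℝ) ^ (-α) * (n : ℝ) ^ 2 ≤ (1 - cos (n * p)) * (n : ℝ) ^ (-α) := by
    intro n hn
    obtain ⟨hn1, hnN⟩ := Finset.mem_Icc.1 hn
    have hnN' : (n : ℝ) ≤ N := by exact_mod_cast hnN
    have hcos : 2 / π ^ 2 * (n * p) ^ 2 ≤ 1 - cos (n * p) := by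
      have := cos_le_one_sub_mul_cos_sq (x := n * p)
        (by rw [abs_of_nonneg (by positivity)]; nlinarith)
      linarith
    have hpow : (N : ℝ) ^ (-α) ≤ (n : ℝ) ^ (-α) :=
      rpow_le_rpow_of_nonpos (by positivity) hnN' (by linarith)
    calc 2 / π ^ 2 * p ^ 2 * (N : ℝ) ^ (-α) * (n : ℝ) ^ 2
        = 2 / π ^ 2 * (n * p) ^ 2 * (N : ℝ) ^ (-α) := by ring
      _ ≤ (1 - cos (n * p)) * (n : ℝ) ^ (-α) :=
        mul_le_mul hcos hpow (by positivity) (sub_nonneg.2 (cos_le_one _))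
  calc p ^ 2 * (N : ℝ) ^ (3 - α) / (3 * π ^ 2)
      = 2 / π ^ 2 * p ^ 2 * (N : ℝ) ^ (-α) * ((N : ℝ) ^ 3 / 6) := by
        rw [sub_eq_add_neg, rpow_add hN0', rpow_ofNat]
        field_simp
        ring
    _ ≤ 2 / π ^ 2 * p ^ 2 * (N : ℝ) ^ (-α) * ∑ n ∈ Finset.Icc 1 N, (n : ℝ) ^ 2 := by
        gcongr
        linarith [cube_le_six_mul_sum_sq N]
    _ = ∑ n ∈ Finset.Icc 1 N, 2 / π ^ 2 * p ^ 2 * (N : ℝ) ^ (-α) * (n : ℝ) ^ 2 :=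
        Finset.mul_sum _ _ _
    _ ≤ ∑ n ∈ Finset.Icc 1 N, (1 - cos (n * p)) * (n : ℝ) ^ (-α) := Finset.sum_le_sum hterm
    _ ≤ longRangeSymbol α p :=
        (summable_longRangeSymbol hα p).sum_le_tsum _ fun n _ => longRangeSymbol_term_nonneg p n

theorem longRangeSymbol_ge_rpow (hα1 : 1 < α) (hα3 : α ≤ 3) {p : ℝ} (hp0 : 0 < p)
    (hpπ : p ≤ π) : (π / 2) ^ (3 - α) / (3 * π ^ 2) * p ^ (α - 1) ≤ longRangeSymbol α p := by
  set N := ⌊π / p⌋₊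
  have hN0 : 0 < N := Nat.floor_pos.2 ((one_le_div hp0).2 hpπ)
  have hNp : N * p ≤ π := (le_div_iff₀ hp0).1 (Nat.floor_le (by positivity))
  have hNge : π / 2 / p ≤ N := by
    have hlt : π / p < N + 1 := Nat.lt_floor_add_one _
    have h1 : (1 : ℝ) ≤ N := by exact_mod_cast hN0
    rw [div_right_comm]
    linarith
  refine le_trans ?_ (longRangeSymbol_ge_of_mul_le_pi hα1 hp0.le hN0 hNp)
  calc (π / 2) ^ (3 - α) / (3 * π ^ 2) * p ^ (α - 1)
      = p ^ 2 * (π / 2 / p) ^ (3 - α) / (3 * π ^ 2) := by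
        rw [div_rpow (by positivity) hp0.le, show α - 1 = 2 - (3 - α) by ring,
          rpow_sub hp0, rpow_two]
        ring
    _ ≤ p ^ 2 * (N : ℝ) ^ (3 - α) / (3 * π ^ 2) := by gcongr

theorem integrableOn_inv_longRangeSymbol (hα1 : 1 < α) (hα2 : α < 2) :
    IntegrableOn (fun p => (longRangeSymbol α p)⁻¹) (Ioc 0 π) := by
  set c := (π / 2) ^ (3 - α) / (3 * π ^ 2)
  have hc : 0 < c := by positivity
  have hbound : IntegrableOn (fun p : ℝ => c⁻¹ * p ^ (1 - α)) (Ioc 0 π) :=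
    ((intervalIntegrable_iff_integrableOn_Ioc_of_le pi_pos.le).1
      (intervalIntegral.intervalIntegrable_rpow' (by linarith))).const_mul _
  refine hbound.mono' (continuous_longRangeSymbol hα1).measurable.inv.aestronglyMeasurable
    (ae_restrict_of_forall_mem measurableSet_Ioc fun p hp => ?_)
  have hlow := longRangeSymbol_ge_rpow hα1 (by linarith) hp.1 hp.2
  have hpow : 0 < p ^ (α - 1) := rpow_pos_of_pos hp.1 _
  rw [norm_inv, Real.norm_of_nonneg ((by positivity : 0 ≤ c * p ^ (α - 1)).trans hlow)]
  calc (longRangeSymbol α p)⁻¹ ≤ (c * p ^ (α - 1))⁻¹ := inv_anti₀ (by positivity) hlow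
    _ = c⁻¹ * p ^ (1 - α) := by rw [mul_inv, ← rpow_neg hp.1.le, neg_sub]

end longRangeSymbol

/-- For fixed `ε > 0` and `1 < α < 2`, the infrared-bound integral
`∫_0^π dp / (γ(1 − cos p) + ε·R(p))` tends to `0` as the nearest-neighbor
coupling `γ → +∞`, where `R(p) = ∑_{n=1}^∞ (1 − cos(np)) n^{−α}`.
(The `n = 0` term of the sum below vanishes, so the sum over `ℕ` is the sum
over `n ≥ 1`.) -/
theorem infrared_integral_tendsto_zero (α ε : ℝ) (hα1 : 1 < α) (hα2 : α < 2)
    (hε : 0 < ε) :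
    Tendsto
      (fun γ : ℝ => ∫ p in Set.Ioc (0 : ℝ) Real.pi,
        (γ * (1 - Real.cos p) +
          ε * ∑' n : ℕ, (1 - Real.cos (n * p)) * (n : ℝ) ^ (-α))⁻¹)
      atTop (nhds 0) := by
  have hIoo : ∀ p ∈ Ioc 0 π, p ∈ Ioo 0 (2 * π) := fun p hp => ⟨hp.1, by linarith [hp.2, pi_pos]⟩
  refine tendsto_integral_inv_mul_add_atTop_zero (b := fun p => ε * longRangeSymbol α p)
    (by fun_prop) ((continuous_longRangeSymbol hα1).const_mul ε).aemeasurable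
    (ae_restrict_of_forall_mem measurableSet_Ioc fun p hp => one_sub_cos_pos_of_mem_Ioo (hIoo p hp))
    (ae_restrict_of_forall_mem measurableSet_Ioc fun p hp =>
      mul_pos hε (longRangeSymbol_pos hα1 (hIoo p hp))) ?_
  simpa only [mul_inv] using (integrableOn_inv_longRangeSymbol hα1 hα2).const_mul ε⁻¹
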